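/- arXiv:2410.19516 — 7 statements merged into one kernel-verified Lean document; each statement's English description precedes it below -/
import Mathlib

section
/- Let G be a finite connected simple graph whose vertices carry distinct natural-number identifiers ID, let D be a positive natural number, and let h : V(G) → ℕ satisfy h(v) ≤ D for every vertex v. For each vertex u let center(u) be the vertex v minimizing the pair (dist_G(u,v) − 5·h(v), ID(v)) in lexicographic order (distances taken in ℤ), and for each vertex v let C_v = {u : center(u) = v}. Then: (i) for every vertex u, dist_G(u, center(u)) ≤ 5·h(center(u)) ≤ 5D; (ii) for every vertex u, there is a path in G from u to center(u) of length dist_G(u, center(u)) all of whose vertices w satisfy center(w) = center(u); in particular the distance from u to center(u) inside the induced subgraph G[C_{center(u)}] is at most 5D; and (iii) for every vertex u, the number of vertices v with C_v nonempty and dist_G(u, C_v) ≤ 1 is at most 10D · bad_{h,10D}(u). -/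
lemma walk_induce_aux {V : Type*} {G : SimpleGraph V} {S : Set V} :
    ∀ {u v : V} (p : G.Walk u v), (∀ w ∈ p.support, w ∈ S) → ∀ (hu : u ∈ S) (hv : v ∈ S),
      ∃ q : (G.induce S).Walk ⟨u, hu⟩ ⟨v, hv⟩, q.length = p.length := by
  intro u v p
  induction p with
  | nil => exact fun _ hu hv => ⟨SimpleGraph.Walk.nil, rfl⟩
  | @cons a b c hab p ih =>
    intro hp hu hv
    obtain ⟨q, hq⟩ := ih (fun w hw => hp w (by simp [hw])) (hp b (by simp)) hv
    exact ⟨SimpleGraph.Walk.cons (by exact hab) q, congrArg (· + 1) hq⟩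

/-- For a finite connected simple graph G with distinct identifiers ID,
D > 0, head starts h ≤ D, and `center u` the vertex v minimizing
(dist_G(u,v) − 5·h(v), ID(v)) lexicographically, with badness
bad_{h,10D}(u) = max_{d' ≤ 10D} |{v at distance exactly d' from u attaining the maximal
head start among vertices at distance d'}|, we have:
(i) dist_G(u, center u) ≤ 5·h(center u) ≤ 5·D;
(ii) there is a shortest path from u to center u all of whose vertices w satisfy
center w = center u, and in particular the distance from u to center u inside the
induced subgraph on {x : center x = center u} is at most 5·D;
(iii) the number of vertices v whose cluster C_v = {w : center w = v} is nonempty and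
within distance 1 of u is at most 10·D·bad_{h,10D}(u). -/
theorem stmt_0 {V : Type*} [Fintype V] [DecidableEq V]
    (G : SimpleGraph V) [DecidableRel G.Adj] (hconn : G.Connected)
    (ID : V → ℕ) (hID : Function.Injective ID)
    (D : ℕ) (hD : 0 < D)
    (h : V → ℕ) (hh : ∀ v, h v ≤ D)
    (center : V → V)
    (hcenter : ∀ u v : V,
      ((G.dist u (center u) : ℤ) - 5 * (h (center u) : ℤ) <
          (G.dist u v : ℤ) - 5 * (h v : ℤ)) ∨
      ((G.dist u (center u) : ℤ) - 5 * (h (center u) : ℤ) =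
          (G.dist u v : ℤ) - 5 * (h v : ℤ) ∧ ID (center u) ≤ ID v))
    (bad : V → ℕ)
    (hbad : ∀ u : V, bad u = (Finset.range (10 * D + 1)).sup (fun d' =>
      ((Finset.univ.filter (fun v : V => G.dist u v = d')).filter
        (fun v : V => ∀ v' ∈ Finset.univ.filter (fun w : V => G.dist u w = d'),
          h v' ≤ h v)).card)) :
    (∀ u : V, G.dist u (center u) ≤ 5 * h (center u) ∧ 5 * h (center u) ≤ 5 * D) ∧
    (∀ u : V, ∃ p : G.Walk u (center u),
        p.length = G.dist u (center u) ∧ ∀ w ∈ p.support, center w = center u) ∧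
    (∀ u : V, ∀ hc : center (center u) = center u,
        (G.induce {x : V | center x = center u}).dist ⟨u, rfl⟩ ⟨center u, hc⟩ ≤ 5 * D) ∧
    (∀ u : V,
      (Finset.univ.filter (fun v : V =>
        ∃ w : V, center w = v ∧ G.dist u w ≤ 1)).card ≤ 10 * D * bad u) := by
  -- Part (i)
  have part1 : ∀ u : V, G.dist u (center u) ≤ 5 * h (center u) := by
    intro u
    have := hcenter u u
    rw [SimpleGraph.dist_self] at this
    rcases this with h1 | ⟨h1, _⟩ <;> omega
  -- Key lemma: any vertex on a shortest u-(center u) path has the same center.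
  have keylem : ∀ u w : V, G.dist u w + G.dist w (center u) ≤ G.dist u (center u) →
      center w = center u := by
    intro u w hw
    have ht : G.dist u (center w) ≤ G.dist u w + G.dist w (center w) := hconn.dist_triangle
    rcases hcenter u (center w) with h1 | ⟨h1, hid1⟩ <;>
      rcases hcenter w (center u) with h2 | ⟨h2, hid2⟩
    · omega
    · omega
    · omega
    · exact hID (le_antisymm hid2 (by omega))
  -- Part (ii)
  have part2 : ∀ u : V, ∃ p : G.Walk u (center u),
      p.length = G.dist u (center u) ∧ ∀ w ∈ p.support, center w = center u := by
    intro u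
    obtain ⟨p, hp⟩ := hconn.exists_walk_length_eq_dist u (center u)
    refine ⟨p, hp, fun w hw => ?_⟩
    obtain ⟨q, r, hqr⟩ := SimpleGraph.Walk.mem_support_iff_exists_append.mp hw
    apply keylem
    calc G.dist u w + G.dist w (center u) ≤ q.length + r.length :=
          Nat.add_le_add (SimpleGraph.dist_le q) (SimpleGraph.dist_le r)
      _ = p.length := by rw [hqr, SimpleGraph.Walk.length_append]
      _ = G.dist u (center u) := hp
  refine ⟨fun u => ⟨part1 u, by have := hh (center u); omega⟩, part2, ?_, ?_⟩
  · -- Part (iii)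
    intro u hc
    obtain ⟨p, hp, hps⟩ := part2 u
    obtain ⟨q, hq⟩ := walk_induce_aux (S := {x : V | center x = center u}) p
      (fun w hw => hps w hw) rfl hc
    calc (G.induce {x : V | center x = center u}).dist ⟨u, rfl⟩ ⟨center u, hc⟩
        ≤ q.length := SimpleGraph.dist_le q
      _ = p.length := hq
      _ = G.dist u (center u) := hp
      _ ≤ 5 * h (center u) := part1 u
      _ ≤ 5 * D := by have := hh (center u); omega
  · -- Part (iv)
    intro u
    set B : ℕ → Finset V := fun d' =>
      ((Finset.univ.filter (fun v : V => G.dist u v = d')).filter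
        (fun v : V => ∀ v' ∈ Finset.univ.filter (fun w : V => G.dist u w = d'),
          h v' ≤ h v)) with hB
    have hsub : (Finset.univ.filter (fun v : V =>
        ∃ w : V, center w = v ∧ G.dist u w ≤ 1)) ⊆ (Finset.range (10 * D)).biUnion B := by
      intro v hv
      rw [Finset.mem_filter] at hv
      obtain ⟨-, w, hw, he⟩ := hv
      have hwv : G.dist w v ≤ 5 * h v := by have := part1 w; rwa [hw] at this
      have htv : G.dist u v ≤ G.dist u w + G.dist w v := hconn.dist_triangle
      have hdlt : G.dist u v < 10 * D := by have := hh v; omega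
      rw [Finset.mem_biUnion]
      refine ⟨G.dist u v, Finset.mem_range.mpr hdlt, ?_⟩
      rw [hB]
      simp only [Finset.mem_filter, Finset.mem_univ, true_and]
      intro v' hd'
      have ht1 : G.dist w v' ≤ G.dist w u + G.dist u v' := hconn.dist_triangle
      have ht2 : G.dist w u = G.dist u w := SimpleGraph.dist_comm
      have := hcenter w v'
      rw [hw] at this
      rcases this with h1 | ⟨h1, -⟩ <;> omega
    calc (Finset.univ.filter (fun v : V =>
          ∃ w : V, center w = v ∧ G.dist u w ≤ 1)).card
        ≤ ((Finset.range (10 * D)).biUnion B).card := Finset.card_le_card hsub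
      _ ≤ ∑ d' ∈ Finset.range (10 * D), (B d').card := Finset.card_biUnion_le
      _ ≤ ∑ _d' ∈ Finset.range (10 * D), bad u := by
          refine Finset.sum_le_sum fun d' hd' => ?_
          rw [hbad]
          have hm : d' ∈ Finset.range (10 * D + 1) :=
            Finset.mem_range.mpr (by have := Finset.mem_range.mp hd'; omega)
          exact Finset.le_sup (f := fun d' => (B d').card) hm
      _ = 10 * D * bad u := by rw [Finset.sum_const, Finset.card_range, smul_eq_mul]
end

section
/- Let S_ground be a finite set, let 𝒮 be a finite nonempty collection of subsets of S_ground, let x : S_ground → [0,1], and let q ∈ (0,1]. Then there exists a q-integral vector y : S_ground → ℝ (i.e., y_j ∈ {0} ∪ [q,1] for every j ∈ S_ground) such that for every S ∈ 𝒮, |∑_{j∈S} x_j − ∑_{j∈S} y_j| ≤ 0.01·∑_{j∈S} x_j + 10^6 · q · ln(2|𝒮|). -/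
open Finset

lemma exp_quad_bound (u : ℝ) (hu : u ≤ 1/2) : Real.exp u ≤ 1 + u + 2*u^2 := by
  have h1 : 1 - u ≤ Real.exp (-u) := by
    have := Real.add_one_le_exp (-u); linarith
  have h3 : (1 - u) * Real.exp u ≤ 1 := by
    calc (1-u) * Real.exp u ≤ Real.exp (-u) * Real.exp u :=
      mul_le_mul_of_nonneg_right h1 (Real.exp_pos u).le
    _ = 1 := by rw [← Real.exp_add]; simp
  nlinarith [Real.exp_pos u, mul_nonneg (sq_nonneg u) (by linarith : (0:ℝ) ≤ 1 - 2*u)]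

/-- total mass of a product measure is 1 -/
lemma sum_prod_one {ι : Type*} [Fintype ι] [DecidableEq ι] (c : ι → Bool → ℝ)
    (hcsum : ∀ j, c j true + c j false = 1) :
    (∑ b : ι → Bool, ∏ j, c j (b j)) = 1 := by
  rw [← Fintype.piFinset_univ, ← Finset.prod_univ_sum]
  exact Finset.prod_eq_one (fun j _ => by rw [Fintype.sum_bool]; exact hcsum j)

/-- expectation of a product of exponentials factorizes and is bounded -/
lemma exp_prod_le {ι : Type*} [Fintype ι] [DecidableEq ι]
    (c : ι → Bool → ℝ) (hc0 : ∀ j β, 0 ≤ c j β)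
    (φ : ι → Bool → ℝ) (B : ι → ℝ)
    (hφ : ∀ j, c j true * Real.exp (φ j true) + c j false * Real.exp (φ j false)
      ≤ Real.exp (B j)) :
    (∑ b : ι → Bool, (∏ j, c j (b j)) * Real.exp (∑ j, φ j (b j)))
      ≤ Real.exp (∑ j, B j) := by
  calc (∑ b : ι → Bool, (∏ j, c j (b j)) * Real.exp (∑ j, φ j (b j)))
      = ∑ b : ι → Bool, ∏ j, (c j (b j) * Real.exp (φ j (b j))) := by
        refine Finset.sum_congr rfl fun b _ => ?_
        rw [Real.exp_sum, Finset.prod_mul_distrib]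
    _ = ∏ j, (c j true * Real.exp (φ j true) + c j false * Real.exp (φ j false)) := by
        rw [← Fintype.piFinset_univ,
          ← Finset.prod_univ_sum (fun _ => (Finset.univ : Finset Bool))
            (fun j β => c j β * Real.exp (φ j β))]
        exact Finset.prod_congr rfl fun j _ => by rw [Fintype.sum_bool]
    _ ≤ ∏ j, Real.exp (B j) := by
        refine Finset.prod_le_prod (fun j _ => ?_) (fun j _ => hφ j)
        have := mul_nonneg (hc0 j true) (Real.exp_pos (φ j true)).le
        have := mul_nonneg (hc0 j false) (Real.exp_pos (φ j false)).le
        linarith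
    _ = Real.exp (∑ j, B j) := (Real.exp_sum _ _).symm

/-- single-coordinate mgf bound for the rounding distribution -/
lemma coord_mgf (q s pj xj : ℝ) (hq : 0 < q) (hs : s * q ≤ 1/2)
    (hp0 : 0 ≤ pj) (hpq : pj * q = xj) :
    pj * Real.exp (s * (q - xj)) + (1 - pj) * Real.exp (s * (0 - xj))
      ≤ Real.exp (2 * s^2 * q * xj) := by
  have hE : pj * Real.exp (s * (q - xj)) + (1 - pj) * Real.exp (s * (0 - xj))
      = Real.exp (-(s * xj)) * (1 + pj * (Real.exp (s*q) - 1)) := by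
    have e1 : s * (q - xj) = s*q + -(s * xj) := by ring
    have e2 : s * ((0:ℝ) - xj) = -(s * xj) := by ring
    rw [e1, e2, Real.exp_add]
    ring
  rw [hE]
  have hb := exp_quad_bound (s*q) hs
  have h1 : pj * (Real.exp (s*q) - 1) ≤ s * xj + 2 * s^2 * q * xj := by
    have h1' : pj * (Real.exp (s*q) - 1) ≤ pj * (s*q + 2*(s*q)^2) :=
      mul_le_mul_of_nonneg_left (by linarith) hp0
    have h2 : pj * (s*q + 2*(s*q)^2) = s * (pj * q) + 2*s^2*q*(pj * q) := by ring
    rw [h2, hpq] at h1'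
    exact h1'
  have h3 : 1 + pj * (Real.exp (s*q) - 1) ≤ Real.exp (s * xj + 2 * s^2 * q * xj) := by
    have := Real.add_one_le_exp (s * xj + 2 * s^2 * q * xj)
    linarith
  calc Real.exp (-(s * xj)) * (1 + pj * (Real.exp (s*q) - 1))
      ≤ Real.exp (-(s * xj)) * Real.exp (s * xj + 2 * s^2 * q * xj) :=
        mul_le_mul_of_nonneg_left h3 (Real.exp_pos _).le
    _ = Real.exp (2 * s^2 * q * xj) := by rw [← Real.exp_add]; ring_nf

/-- partial rounding lemma: Given a finite ground set, a finite nonempty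
collection 𝒮 of subsets, x : ground → [0,1] and q ∈ (0,1], there exists a q-integral
y (each y_j ∈ {0} ∪ [q,1]) with
|∑_{j∈S} x_j − ∑_{j∈S} y_j| ≤ 0.01·∑_{j∈S} x_j + 10^6·q·ln(2|𝒮|) for every S ∈ 𝒮. -/
theorem stmt_1 {ι : Type*} [Fintype ι] [DecidableEq ι]
    (𝒮 : Finset (Finset ι)) (h𝒮 : 𝒮.Nonempty)
    (x : ι → ℝ) (hx : ∀ j, x j ∈ Set.Icc (0:ℝ) 1)
    (q : ℝ) (hq : q ∈ Set.Ioc (0:ℝ) 1) :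
    ∃ y : ι → ℝ, (∀ j, y j = 0 ∨ y j ∈ Set.Icc q 1) ∧
      ∀ S ∈ 𝒮, |(∑ j ∈ S, x j) - ∑ j ∈ S, y j| ≤
        0.01 * (∑ j ∈ S, x j) + 10^6 * q * Real.log (2 * 𝒮.card) := by
  classical
  obtain ⟨hq0, hq1⟩ := hq
  have hqne : q ≠ 0 := ne_of_gt hq0
  set L : ℝ := Real.log (2 * 𝒮.card) with hLdef
  have hm1 : 1 ≤ 𝒮.card := Finset.card_pos.mpr h𝒮
  have h2m : (2:ℝ) ≤ 2 * 𝒮.card := by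
    have : (1:ℝ) ≤ 𝒮.card := by exact_mod_cast hm1
    linarith
  have hLpos : 0 < L := Real.log_pos (by linarith)
  have hexpL : Real.exp L = 2 * 𝒮.card := Real.exp_log (by linarith)
  set lam : ℝ := 1 / (200 * q) with hlam
  have hlampos : 0 < lam := by positivity
  have hlamq : lam * q = 1 / 200 := by rw [hlam]; field_simp
  set F : Finset ι := Finset.univ.filter (fun j => 0 < x j ∧ x j < q) with hF
  set p : ι → ℝ := fun j => if j ∈ F then x j / q else 0 with hp
  have hp0 : ∀ j, 0 ≤ p j := by
    intro j; rw [hp]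
    dsimp only
    split
    · rename_i h; rw [hF, Finset.mem_filter] at h
      exact div_nonneg h.2.1.le hq0.le
    · exact le_refl 0
  have hp1 : ∀ j, p j ≤ 1 := by
    intro j; rw [hp]
    dsimp only
    split
    · rename_i h; rw [hF, Finset.mem_filter] at h
      exact (div_le_one hq0).mpr h.2.2.le
    · norm_num
  set c : ι → Bool → ℝ := fun j β => if β then p j else 1 - p j with hc
  have hc0 : ∀ j β, 0 ≤ c j β := by
    intro j β; rw [hc]
    cases β
    · simpa using by linarith [hp1 j]
    · simpa using hp0 j
  have hcsum : ∀ j, c j true + c j false = 1 := by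
    intro j; rw [hc]; simp
  set Y : (ι → Bool) → ι → ℝ := fun b j => if j ∈ F then (if b j then q else 0) else x j with hY
  set w : (ι → Bool) → ℝ := fun b => ∏ j, c j (b j) with hw
  have hw0 : ∀ b, 0 ≤ w b := fun b => Finset.prod_nonneg (fun j _ => hc0 j (b j))
  have hwsum : (∑ b : ι → Bool, w b) = 1 := sum_prod_one c hcsum
  set D : Finset ι → (ι → Bool) → ℝ := fun S b => ∑ j ∈ S, (Y b j - x j) with hD
  -- MGF bound
  have key : ∀ S : Finset ι, ∀ s : ℝ, s * q ≤ 1/2 →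
      (∑ b : ι → Bool, w b * Real.exp (s * D S b)) ≤
        Real.exp (2 * s^2 * q * ∑ j ∈ S, x j) := by
    intro S s hs
    set φ : ι → Bool → ℝ := fun j β =>
      if j ∈ S ∩ F then s * ((if β then q else 0) - x j) else 0 with hφ
    set B : ι → ℝ := fun j => if j ∈ S ∩ F then 2 * s^2 * q * x j else 0 with hB
    have hDφ : ∀ b : ι → Bool, s * D S b = ∑ j, φ j (b j) := by
      intro b
      have h1 : (∑ j, φ j (b j)) = ∑ j ∈ S ∩ F, s * ((if b j then q else 0) - x j) := by
        rw [hφ]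
        dsimp only
        rw [Finset.sum_ite_mem, Finset.univ_inter]
      have h2 : D S b = ∑ j ∈ S ∩ F, ((if b j then q else 0) - x j) := by
        show (∑ j ∈ S, (Y b j - x j)) = _
        calc (∑ j ∈ S, (Y b j - x j))
            = ∑ j ∈ S ∩ F, (Y b j - x j) := by
              refine (Finset.sum_subset Finset.inter_subset_left (fun j hjS hjA => ?_)).symm
              have hjF : j ∉ F := fun h => hjA (Finset.mem_inter.mpr ⟨hjS, h⟩)
              rw [hY]; dsimp only; rw [if_neg hjF]; ring
          _ = _ := Finset.sum_congr rfl (fun j hj => by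
              have hjF : j ∈ F := (Finset.mem_inter.mp hj).2
              rw [hY]; dsimp only; rw [if_pos hjF])
      rw [h1, h2, Finset.mul_sum]
    have hφbound : ∀ j, c j true * Real.exp (φ j true) + c j false * Real.exp (φ j false)
        ≤ Real.exp (B j) := by
      intro j
      by_cases hjA : j ∈ S ∩ F
      · have hjF : j ∈ F := (Finset.mem_inter.mp hjA).2
        have hct : c j true = p j := by simp [hc]
        have hcf : c j false = 1 - p j := by simp [hc]
        have hφt : φ j true = s * (q - x j) := by rw [hφ]; dsimp only; rw [if_pos hjA]; simp
        have hφf : φ j false = s * (0 - x j) := by rw [hφ]; dsimp only; rw [if_pos hjA]; simp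
        have hBj : B j = 2 * s^2 * q * x j := by rw [hB]; dsimp only; rw [if_pos hjA]
        rw [hct, hcf, hφt, hφf, hBj]
        have hpj : p j = x j / q := by rw [hp]; dsimp only; rw [if_pos hjF]
        have hpq : p j * q = x j := by rw [hpj]; field_simp
        exact coord_mgf q s (p j) (x j) hq0 hs (hp0 j) hpq
      · have hφt : φ j true = 0 := by rw [hφ]; dsimp only; rw [if_neg hjA]
        have hφf : φ j false = 0 := by rw [hφ]; dsimp only; rw [if_neg hjA]
        have hBj : B j = 0 := by rw [hB]; dsimp only; rw [if_neg hjA]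
        rw [hφt, hφf, hBj, Real.exp_zero, mul_one, mul_one, hcsum j]
    have hBsum : (∑ j, B j) ≤ 2 * s^2 * q * ∑ j ∈ S, x j := by
      have h1 : (∑ j, B j) = ∑ j ∈ S ∩ F, 2 * s^2 * q * x j := by
        rw [hB]; dsimp only; rw [Finset.sum_ite_mem, Finset.univ_inter]
      rw [h1, ← Finset.mul_sum]
      apply mul_le_mul_of_nonneg_left _ (by positivity)
      exact Finset.sum_le_sum_of_subset_of_nonneg Finset.inter_subset_left
        (fun j hj _ => (hx j).1)
    calc (∑ b : ι → Bool, w b * Real.exp (s * D S b))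
        = ∑ b : ι → Bool, (∏ j, c j (b j)) * Real.exp (∑ j, φ j (b j)) := by
          refine Finset.sum_congr rfl fun b _ => ?_
          rw [hDφ b, hw]
      _ ≤ Real.exp (∑ j, B j) := exp_prod_le c hc0 φ B hφbound
      _ ≤ Real.exp (2 * s^2 * q * ∑ j ∈ S, x j) := Real.exp_le_exp.mpr hBsum
  -- exact exponent computation
  set t : Finset ι → ℝ := fun S => 0.01 * (∑ j ∈ S, x j) + 10^6 * q * L with ht
  have hexact : ∀ S : Finset ι, 2 * lam^2 * q * (∑ j ∈ S, x j) - lam * t S = -(5000 * L) := by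
    intro S
    rw [ht, hlam]
    dsimp only
    field_simp
    ring
  -- main existence
  have main : ∃ b : ι → Bool, ∀ S ∈ 𝒮, |D S b| ≤ t S := by
    by_contra hcon
    push_neg at hcon
    have hind : ∀ b : ι → Bool, (1:ℝ) ≤ ∑ S ∈ 𝒮,
        (Real.exp (lam * D S b - lam * t S) + Real.exp ((-lam) * D S b - lam * t S)) := by
      intro b
      obtain ⟨S, hS, hlt⟩ := hcon b
      have h1 : (1:ℝ) ≤ Real.exp (lam * D S b - lam * t S)
          + Real.exp ((-lam) * D S b - lam * t S) := by
        rcases abs_cases (D S b) with ⟨he, _⟩ | ⟨he, _⟩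
        · have h0 : 0 ≤ lam * D S b - lam * t S := by
            rw [he] at hlt; nlinarith
          have := Real.one_le_exp h0
          have := (Real.exp_pos ((-lam) * D S b - lam * t S)).le
          linarith
        · have h0 : 0 ≤ (-lam) * D S b - lam * t S := by
            rw [he] at hlt; nlinarith
          have := Real.one_le_exp h0
          have := (Real.exp_pos (lam * D S b - lam * t S)).le
          linarith
      refine le_trans h1 (Finset.single_le_sum
        (f := fun T => Real.exp (lam * D T b - lam * t T) + Real.exp ((-lam) * D T b - lam * t T))
        (fun T _ => ?_) hS)
      positivity
    have hchain : (1:ℝ) ≤ ∑ S ∈ 𝒮, 2 * Real.exp (-(5000 * L)) := by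
      calc (1:ℝ) = ∑ b : ι → Bool, w b := hwsum.symm
        _ ≤ ∑ b : ι → Bool, w b * (∑ S ∈ 𝒮,
            (Real.exp (lam * D S b - lam * t S) + Real.exp ((-lam) * D S b - lam * t S))) := by
            refine Finset.sum_le_sum fun b _ => ?_
            calc w b = w b * 1 := (mul_one _).symm
              _ ≤ _ := mul_le_mul_of_nonneg_left (hind b) (hw0 b)
        _ = ∑ S ∈ 𝒮, ∑ b : ι → Bool,
            (w b * Real.exp (lam * D S b - lam * t S)
              + w b * Real.exp ((-lam) * D S b - lam * t S)) := by
            rw [Finset.sum_comm]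
            refine Finset.sum_congr rfl fun b _ => ?_
            rw [Finset.mul_sum]
            exact Finset.sum_congr rfl fun S _ => by ring
        _ ≤ ∑ S ∈ 𝒮, 2 * Real.exp (-(5000 * L)) := by
            refine Finset.sum_le_sum fun S hS => ?_
            have k1 := key S lam (by rw [hlamq]; norm_num)
            have k2 := key S (-lam) (by
              have h' : -lam * q = -(1/200) := by rw [neg_mul, hlamq]
              rw [h']; norm_num)
            have hsq : ((-lam))^2 = lam^2 := by ring
            rw [hsq] at k2
            have hre : ∀ u : ℝ, Real.exp (u - lam * t S) = Real.exp u * Real.exp (-(lam * t S)) := by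
              intro u; rw [← Real.exp_add]; ring_nf
            have hsplit : (∑ b : ι → Bool,
                (w b * Real.exp (lam * D S b - lam * t S)
                  + w b * Real.exp ((-lam) * D S b - lam * t S)))
                = (∑ b : ι → Bool, w b * Real.exp (lam * D S b)) * Real.exp (-(lam * t S))
                  + (∑ b : ι → Bool, w b * Real.exp ((-lam) * D S b)) * Real.exp (-(lam * t S)) := by
              rw [Finset.sum_add_distrib, Finset.sum_mul, Finset.sum_mul]
              congr 1
              · exact Finset.sum_congr rfl fun b _ => by rw [hre]; ring
              · exact Finset.sum_congr rfl fun b _ => by rw [hre]; ring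
            rw [hsplit]
            have hne : (0:ℝ) < Real.exp (-(lam * t S)) := Real.exp_pos _
            have hb1 : (∑ b : ι → Bool, w b * Real.exp (lam * D S b)) * Real.exp (-(lam * t S))
                ≤ Real.exp (2 * lam^2 * q * ∑ j ∈ S, x j) * Real.exp (-(lam * t S)) :=
              mul_le_mul_of_nonneg_right k1 hne.le
            have hb2 : (∑ b : ι → Bool, w b * Real.exp ((-lam) * D S b)) * Real.exp (-(lam * t S))
                ≤ Real.exp (2 * lam^2 * q * ∑ j ∈ S, x j) * Real.exp (-(lam * t S)) :=
              mul_le_mul_of_nonneg_right k2 hne.le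
            have heq : Real.exp (2 * lam^2 * q * ∑ j ∈ S, x j) * Real.exp (-(lam * t S))
                = Real.exp (-(5000 * L)) := by
              rw [← Real.exp_add]
              congr 1
              have := hexact S
              linarith
            rw [heq] at hb1 hb2
            linarith
    have hfin : (∑ S ∈ 𝒮, 2 * Real.exp (-(5000 * L))) < 1 := by
      rw [Finset.sum_const, nsmul_eq_mul]
      have h1 : (𝒮.card : ℝ) * (2 * Real.exp (-(5000 * L)))
          = Real.exp L * Real.exp (-(5000*L)) := by rw [hexpL]; ring
      rw [h1, ← Real.exp_add]
      have h2 : L + -(5000 * L) = -(4999 * L) := by ring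
      rw [h2]
      calc Real.exp (-(4999*L)) < Real.exp 0 := Real.exp_lt_exp.mpr (by linarith)
        _ = 1 := Real.exp_zero
    linarith
  obtain ⟨b, hb⟩ := main
  refine ⟨Y b, ?_, ?_⟩
  · intro j
    by_cases hjF : j ∈ F
    · have : Y b j = if b j then q else 0 := by rw [hY]; dsimp only; rw [if_pos hjF]
      rw [this]
      cases hbj : b j
      · left; simp
      · right; simp only [if_true]; exact ⟨le_refl q, hq1⟩
    · have hYj : Y b j = x j := by rw [hY]; dsimp only; rw [if_neg hjF]
      rw [hYj]
      rw [hF, Finset.mem_filter] at hjF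
      push_neg at hjF
      have h := hjF (Finset.mem_univ j)
      rcases lt_or_ge 0 (x j) with hpos | hle
      · right; exact ⟨h hpos, (hx j).2⟩
      · left; linarith [(hx j).1]
  · intro S hS
    have hDb := hb S hS
    have hDS : D S b = (∑ j ∈ S, Y b j) - ∑ j ∈ S, x j := by
      show (∑ j ∈ S, (Y b j - x j)) = _
      rw [Finset.sum_sub_distrib]
    rw [hDS] at hDb
    rw [abs_sub_comm]
    exact hDb
end

section
/- Let H be a finite bipartite graph with bipartition U ⊔ V, and for u ∈ U let Γ(u) ⊆ V denote its neighborhood. Let T_inner ≥ 10 and T_outer ≥ 1 be natural numbers. Let V' ⊆ V, let V'^{sub} ⊆ V', let V''^{sub} ⊆ V, and set V^{sub} = V'^{sub} ∪ V''^{sub}. Define U^{bad} = {u ∈ U : |Γ(u)| ≥ e^{(T_inner+1)·T_outer}·e^{100·T_inner} and |Γ(u) ∩ V^{sub}| < e^{−(T_inner+1)·T_outer}·|Γ(u)|}, U'^{bad} = {u ∈ U : |Γ(u) ∩ V'| ≥ e^{(T_inner+1)·(T_outer−1)}·e^{100·T_inner} and |Γ(u) ∩ V'^{sub}| < e^{−(T_inner+1)·(T_outer−1)}·|Γ(u)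 ∩ V'|}, and U''^{bad} = {u ∈ U : |Γ(u)| ≥ e^{(T_inner+1)·T_outer}·e^{100·T_inner} and |Γ(u) ∩ V''^{sub}| < e^{−(T_inner+1)·T_outer}·|Γ(u)|}. Then U^{bad} ⊆ U'^{bad} ∪ { u ∈ U''^{bad} : |Γ(u) ∩ V'| < e^{−(T_inner+1)}·|Γ(u)| }. -/
/-- For a finite bipartite graph given by its neighborhood map
Γ : 𝒰 → Finset 𝒱, naturals T_inner ≥ 10, T_outer ≥ 1, sets V'ˢᵘᵇ ⊆ V' ⊆ 𝒱,
V''ˢᵘᵇ ⊆ 𝒱 and Vˢᵘᵇ = V'ˢᵘᵇ ∪ V''ˢᵘᵇ, the bad set U^{bad} is contained in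
U'^{bad} ∪ {u ∈ U''^{bad} : |Γ(u) ∩ V'| < e^{−(T_inner+1)}·|Γ(u)|}. -/
theorem stmt_10 {𝒰 𝒱 : Type*} [Fintype 𝒱] [DecidableEq 𝒱]
    (Γ : 𝒰 → Finset 𝒱)
    (Ti To : ℕ) (hTi : 10 ≤ Ti) (hTo : 1 ≤ To)
    (V' V'sub V''sub : Finset 𝒱) (hV' : V'sub ⊆ V')
    (Vsub : Finset 𝒱) (hVsub : Vsub = V'sub ∪ V''sub)
    (Ubad U'bad U''bad : Set 𝒰)
    (hUbad : Ubad = {u : 𝒰 |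
      Real.exp (((Ti:ℝ) + 1) * To) * Real.exp (100 * Ti) ≤ ((Γ u).card : ℝ) ∧
      ((Γ u ∩ Vsub).card : ℝ) < Real.exp (-((Ti:ℝ) + 1) * To) * ((Γ u).card : ℝ)})
    (hU'bad : U'bad = {u : 𝒰 |
      Real.exp (((Ti:ℝ) + 1) * ((To:ℝ) - 1)) * Real.exp (100 * Ti) ≤ ((Γ u ∩ V').card : ℝ) ∧
      ((Γ u ∩ V'sub).card : ℝ) <
        Real.exp (-((Ti:ℝ) + 1) * ((To:ℝ) - 1)) * ((Γ u ∩ V').card : ℝ)})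
    (hU''bad : U''bad = {u : 𝒰 |
      Real.exp (((Ti:ℝ) + 1) * To) * Real.exp (100 * Ti) ≤ ((Γ u).card : ℝ) ∧
      ((Γ u ∩ V''sub).card : ℝ) < Real.exp (-((Ti:ℝ) + 1) * To) * ((Γ u).card : ℝ)}) :
    Ubad ⊆ U'bad ∪
      {u ∈ U''bad | ((Γ u ∩ V').card : ℝ) < Real.exp (-((Ti:ℝ) + 1)) * ((Γ u).card : ℝ)} := by
  subst hUbad hU'bad hU''bad hVsub
  intro u hu
  obtain ⟨h1, h2⟩ := hu
  by_cases hc : ((Γ u ∩ V').card : ℝ) < Real.exp (-((Ti:ℝ) + 1)) * ((Γ u).card : ℝ)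
  · right
    refine ⟨⟨h1, lt_of_le_of_lt ?_ h2⟩, hc⟩
    exact_mod_cast Finset.card_le_card (Finset.inter_subset_inter (Finset.Subset.refl _) Finset.subset_union_right)
  · left
    push_neg at hc
    constructor
    · calc Real.exp (((Ti:ℝ) + 1) * ((To:ℝ) - 1)) * Real.exp (100 * Ti)
          = Real.exp (-((Ti:ℝ) + 1)) * (Real.exp (((Ti:ℝ) + 1) * To) * Real.exp (100 * Ti)) := by
            simp only [← Real.exp_add]; congr 1; ring
        _ ≤ Real.exp (-((Ti:ℝ) + 1)) * ((Γ u).card : ℝ) := by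
            exact mul_le_mul_of_nonneg_left h1 (Real.exp_pos _).le
        _ ≤ ((Γ u ∩ V').card : ℝ) := hc
    · calc ((Γ u ∩ V'sub).card : ℝ)
          ≤ ((Γ u ∩ (V'sub ∪ V''sub)).card : ℝ) := by
            exact_mod_cast Finset.card_le_card
              (Finset.inter_subset_inter (Finset.Subset.refl _) Finset.subset_union_left)
        _ < Real.exp (-((Ti:ℝ) + 1) * To) * ((Γ u).card : ℝ) := h2
        _ ≤ Real.exp (-((Ti:ℝ) + 1) * To) * (Real.exp ((Ti:ℝ) + 1) * ((Γ u ∩ V').card : ℝ)) := by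
            apply mul_le_mul_of_nonneg_left _ (Real.exp_pos _).le
            have h4 : Real.exp ((Ti:ℝ)+1) * Real.exp (-((Ti:ℝ)+1)) = 1 := by
              rw [← Real.exp_add]
              norm_num
            nlinarith [mul_le_mul_of_nonneg_left hc (Real.exp_pos ((Ti:ℝ)+1)).le]
        _ = Real.exp (-((Ti:ℝ) + 1) * ((To:ℝ) - 1)) * ((Γ u ∩ V').card : ℝ) := by
            rw [← mul_assoc, ← Real.exp_add]; congr 2; ring
end

section
/- Let G be a finite simple graph with an injective identifier function ID : V(G) → ℕ. Orient every edge {u,v} of G from u to v if and only if (deg(u), ID(u)) < (deg(v), ID(v)) in lexicographic order; for a vertex v let IN(v) = {u ∈ N(v) : (deg(u), ID(u)) < (deg(v), ID(v))} and call v good if |IN(v)| ≥ deg(v)/3. Then ∑_{good vertices v} deg(v) ≥ |E(G)|/2. -/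
open Finset

open scoped Classical in
private lemma stmt_11_aux {V : Type*} [Fintype V] [DecidableEq V]
    (G : SimpleGraph V) [DecidableRel G.Adj]
    (ID : V → ℕ) (hID : Function.Injective ID) :
    ∑ v, ((G.neighborFinset v).filter (fun u =>
        G.degree u < G.degree v ∨ (G.degree u = G.degree v ∧ ID u < ID v))).card
      = G.edgeFinset.card := by
  set P : V → V → Prop := fun u v =>
    G.degree u < G.degree v ∨ (G.degree u = G.degree v ∧ ID u < ID v) with hPdef
  have htri : ∀ u v : V, u ≠ v → (¬ P u v ↔ P v u) := by
    intro u v huv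
    have hid : ID u ≠ ID v := fun h => huv (hID h)
    simp only [hPdef]
    omega
  have keyP : ∑ v, ((G.neighborFinset v).filter (fun u => P u v)).card
        = ∑ v, ∑ u, if G.Adj v u ∧ P u v then 1 else 0 := by
    refine Finset.sum_congr rfl fun v _ => ?_
    rw [Finset.card_filter, SimpleGraph.neighborFinset_eq_filter, Finset.sum_filter]
    refine Finset.sum_congr rfl fun u _ => ?_
    by_cases h1 : G.Adj v u <;> by_cases h2 : P u v <;> simp [h1, h2]
  have keyQ : ∑ v, ((G.neighborFinset v).filter (fun u => P v u)).card
        = ∑ v, ∑ u, if G.Adj v u ∧ P v u then 1 else 0 := by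
    refine Finset.sum_congr rfl fun v _ => ?_
    rw [Finset.card_filter, SimpleGraph.neighborFinset_eq_filter, Finset.sum_filter]
    refine Finset.sum_congr rfl fun u _ => ?_
    by_cases h1 : G.Adj v u <;> by_cases h2 : P v u <;> simp [h1, h2]
  have hswap : ∑ v, ∑ u, (if G.Adj v u ∧ P v u then 1 else 0)
      = ∑ v, ∑ u, (if G.Adj v u ∧ P u v then 1 else 0) := by
    rw [Finset.sum_comm]
    refine Finset.sum_congr rfl fun v _ => Finset.sum_congr rfl fun u _ => ?_
    simp [G.adj_comm u v]
  have hsplit : ∀ v : V, ((G.neighborFinset v).filter (fun u => P u v)).card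
      + ((G.neighborFinset v).filter (fun u => P v u)).card = G.degree v := by
    intro v
    have heq : (G.neighborFinset v).filter (fun u => ¬ P u v)
        = (G.neighborFinset v).filter (fun u => P v u) := by
      apply Finset.filter_congr
      intro u hu
      rw [SimpleGraph.mem_neighborFinset] at hu
      have hne : u ≠ v := fun h => by subst h; exact G.loopless.irrefl u hu
      simpa using htri u v hne
    have h := Finset.card_filter_add_card_filter_not
      (s := G.neighborFinset v) (p := fun u => P u v)
    rw [heq] at h
    rw [h, SimpleGraph.card_neighborFinset_eq_degree]
  have h2 : (∑ v, ((G.neighborFinset v).filter (fun u => P u v)).card)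
      + (∑ v, ((G.neighborFinset v).filter (fun u => P u v)).card)
      = 2 * G.edgeFinset.card := by
    calc (∑ v, ((G.neighborFinset v).filter (fun u => P u v)).card)
          + (∑ v, ((G.neighborFinset v).filter (fun u => P u v)).card)
        = (∑ v, ((G.neighborFinset v).filter (fun u => P u v)).card)
          + (∑ v, ((G.neighborFinset v).filter (fun u => P v u)).card) := by
          rw [keyP, keyQ, hswap]
      _ = ∑ v, (((G.neighborFinset v).filter (fun u => P u v)).card
          + ((G.neighborFinset v).filter (fun u => P v u)).card) :=
          (Finset.sum_add_distrib).symm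
      _ = ∑ v, G.degree v := Finset.sum_congr rfl (fun v _ => hsplit v)
      _ = 2 * G.edgeFinset.card := G.sum_degrees_eq_twice_card_edges
  show ∑ v, ((G.neighborFinset v).filter (fun u => P u v)).card = G.edgeFinset.card
  omega

open scoped Classical in
/-- Orienting every edge from the lexicographically smaller (degree, ID)
endpoint to the larger one, and calling v good if it has at least deg(v)/3 incoming
neighbors, the sum of degrees of good vertices is at least |E(G)|/2. -/
theorem stmt_11 {V : Type*} [Fintype V] [DecidableEq V]
    (G : SimpleGraph V) [DecidableRel G.Adj]
    (ID : V → ℕ) (hID : Function.Injective ID) :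
    ((G.edgeFinset.card : ℝ)) / 2 ≤
      ∑ v ∈ Finset.univ.filter (fun v : V =>
          (G.degree v : ℝ) / 3 ≤
            (((G.neighborFinset v).filter (fun u =>
              G.degree u < G.degree v ∨ (G.degree u = G.degree v ∧ ID u < ID v))).card : ℝ)),
        (G.degree v : ℝ) := by
  let IN : V → ℕ := fun v => ((G.neighborFinset v).filter (fun u =>
      G.degree u < G.degree v ∨ (G.degree u = G.degree v ∧ ID u < ID v))).card
  let good : V → Prop := fun v => (G.degree v : ℝ) / 3 ≤ (IN v : ℝ)
  show ((G.edgeFinset.card : ℝ)) / 2 ≤ ∑ v ∈ Finset.univ.filter good, (G.degree v : ℝ)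
  have hE : (G.edgeFinset.card : ℝ) = ∑ v, (IN v : ℝ) := by
    rw [← Nat.cast_sum]
    exact_mod_cast congrArg (Nat.cast : ℕ → ℝ) (stmt_11_aux G ID hID).symm
  have hdegsum : ∑ v, (G.degree v : ℝ) = 2 * G.edgeFinset.card := by
    rw [← Nat.cast_sum]
    exact_mod_cast congrArg (Nat.cast : ℕ → ℝ) G.sum_degrees_eq_twice_card_edges
  have hle : ∀ v, (IN v : ℝ) ≤ G.degree v := by
    intro v
    have : IN v ≤ G.degree v := by
      rw [← SimpleGraph.card_neighborFinset_eq_degree]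
      exact Finset.card_filter_le _ _
    exact_mod_cast this
  have hsplitIN := Finset.sum_filter_add_sum_filter_not Finset.univ good (fun v => (IN v : ℝ))
  have hsplitD := Finset.sum_filter_add_sum_filter_not Finset.univ good (fun v => (G.degree v : ℝ))
  have h1 : ∑ v ∈ Finset.univ.filter good, (IN v : ℝ)
      ≤ ∑ v ∈ Finset.univ.filter good, (G.degree v : ℝ) :=
    Finset.sum_le_sum (fun v _ => hle v)
  have h2 : ∑ v ∈ Finset.univ.filter (fun v => ¬ good v), (IN v : ℝ)
      ≤ (∑ v ∈ Finset.univ.filter (fun v => ¬ good v), (G.degree v : ℝ)) / 3 := by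
    rw [Finset.sum_div]
    refine Finset.sum_le_sum fun v hv => ?_
    rw [Finset.mem_filter] at hv
    have hb : (IN v : ℝ) < (G.degree v : ℝ) / 3 := by
      by_contra hc
      push_neg at hc
      exact hv.2 hc
    exact hb.le
  linarith [hsplitIN, hsplitD, hE, hdegsum, h1, h2]
end

section
/- Let G be a finite simple graph with an injective identifier function ID : V(G) → ℕ, and for a vertex u let OUT(u) = {w ∈ N(u) : (deg(u), ID(u)) < (deg(w), ID(w))} with pairs compared lexicographically. Let Good ⊆ V(G) be a set of vertices, for each v ∈ Good let IN*(v) be a set of neighbors u of v with (deg(u), ID(u)) < (deg(v), ID(v)), and let y : V(G) → ℝ be nonnegative. Assume that for every v ∈ Good, ∑_{u' ∈ IN*(v)} y_{u'} ≤ 1/3, and that for every vertex u, ∑_{w ∈ OUT(u)} y_w ≤ 1/4. Define 𝐮(y) = ∑_{v ∈ Good} (deg(v)/2) · ∑_{u ∈ IN*(v)} y_u and 𝐜(y) = ∑_{v ∈ Good} (deg(v)/2) · ( ∑_{u ∈ IN*(v)} ∑_{u' ∈ IN*(v)} y_u·y_{u'} + ∑_{u ∈ IN*(v)} ∑_{w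 ∈ OUT(u)} y_u·y_w ). Then 𝐮(y) − 𝐜(y) ≥ 𝐮(y)/3. -/
/-!
For a good vertex `v` write `S v = ∑_{u ∈ IN*(v)} y u`. The pair term of `𝐜(y)` at `v` is
`(S v)² ≤ S v / 3`, and the out-neighbour term is `∑_{u ∈ IN*(v)} y u · y(OUT u) ≤ S v / 4`.
Hence `𝐜(y) ≤ (1/3 + 1/4) 𝐮(y) ≤ (2/3) 𝐮(y)`, which is the claim.
-/

open Finset

section OrderedSemiring

variable {ι κ R : Type*} [CommSemiring R] [PartialOrder R] [IsOrderedRing R]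

theorem Finset.sum_sum_mul_le_of_sum_le {s : Finset ι} {f : ι → R} {a : R}
    (hf : ∀ i ∈ s, 0 ≤ f i) (hs : ∑ i ∈ s, f i ≤ a) :
    ∑ i ∈ s, ∑ j ∈ s, f i * f j ≤ a * ∑ i ∈ s, f i := by
  rw [← sum_mul_sum]
  exact mul_le_mul_of_nonneg_right hs (sum_nonneg hf)

theorem Finset.sum_sum_mul_le_of_forall_sum_le {s : Finset ι} {t : ι → Finset κ}
    {f : ι → R} {g : κ → R} {b : R} (hf : ∀ i ∈ s, 0 ≤ f i)
    (ht : ∀ i ∈ s, ∑ j ∈ t i, g j ≤ b) :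
    ∑ i ∈ s, ∑ j ∈ t i, f i * g j ≤ b * ∑ i ∈ s, f i := by
  rw [mul_sum]
  refine sum_le_sum fun i hi => ?_
  rw [← mul_sum, mul_comm b]
  exact mul_le_mul_of_nonneg_left (ht i hi) (hf i hi)

end OrderedSemiring

theorem stmt_14_general {V : Type*} [Fintype V]
    (G : SimpleGraph V) [DecidableRel G.Adj]
    (ID : V → ℕ)
    (Good : Finset V) (INstar : V → Finset V)
    (y : V → ℝ) (hy : ∀ v, 0 ≤ y v)
    (hIN : ∀ v ∈ Good, ∑ u' ∈ INstar v, y u' ≤ 1/3)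
    (hOUT : ∀ u : V,
      ∑ w ∈ (G.neighborFinset u).filter (fun w =>
          G.degree u < G.degree w ∨ (G.degree u = G.degree w ∧ ID u < ID w)), y w ≤ 1/4) :
    (∑ v ∈ Good, (G.degree v : ℝ)/2 * ∑ u ∈ INstar v, y u) / 3 ≤
      (∑ v ∈ Good, (G.degree v : ℝ)/2 * ∑ u ∈ INstar v, y u) -
        ∑ v ∈ Good, (G.degree v : ℝ)/2 *
          ((∑ u ∈ INstar v, ∑ u' ∈ INstar v, y u * y u') +
            ∑ u ∈ INstar v,
              ∑ w ∈ (G.neighborFinset u).filter (fun w =>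
                G.degree u < G.degree w ∨ (G.degree u = G.degree w ∧ ID u < ID w)),
                y u * y w) := by
  suffices h : ∑ v ∈ Good, (G.degree v : ℝ)/2 *
          ((∑ u ∈ INstar v, ∑ u' ∈ INstar v, y u * y u') +
            ∑ u ∈ INstar v,
              ∑ w ∈ (G.neighborFinset u).filter (fun w =>
                G.degree u < G.degree w ∨ (G.degree u = G.degree w ∧ ID u < ID w)),
                y u * y w) ≤
      (2/3) * ∑ v ∈ Good, (G.degree v : ℝ)/2 * ∑ u ∈ INstar v, y u by linarith
  rw [mul_sum]
  refine sum_le_sum fun v hv => ?_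
  have hS : 0 ≤ ∑ u ∈ INstar v, y u := sum_nonneg fun u _ => hy u
  have hpairs := sum_sum_mul_le_of_sum_le (fun u _ => hy u) (hIN v hv)
  have hout := sum_sum_mul_le_of_forall_sum_le (s := INstar v) (fun u _ => hy u)
    (fun u _ => hOUT u)
  have hdeg : (0 : ℝ) ≤ (G.degree v : ℝ)/2 := by positivity
  linarith [mul_le_mul_of_nonneg_left (add_le_add hpairs hout) hdeg, mul_nonneg hdeg hS]

/-- With OUT(u) the out-neighbors of u in the (degree, ID)-lexicographic
orientation, a set Good of vertices, sets IN*(v) of in-neighbors of v for v ∈ Good, and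
nonnegative y with ∑_{u'∈IN*(v)} y_{u'} ≤ 1/3 for all v ∈ Good and
∑_{w∈OUT(u)} y_w ≤ 1/4 for all u, the pessimistic estimator satisfies
𝐮(y) − 𝐜(y) ≥ 𝐮(y)/3. -/
theorem stmt_14 {V : Type*} [Fintype V] [DecidableEq V]
    (G : SimpleGraph V) [DecidableRel G.Adj]
    (ID : V → ℕ) (hID : Function.Injective ID)
    (Good : Finset V) (INstar : V → Finset V)
    (hINstar : ∀ v ∈ Good, ∀ u ∈ INstar v, G.Adj u v ∧
      (G.degree u < G.degree v ∨ (G.degree u = G.degree v ∧ ID u < ID v)))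
    (y : V → ℝ) (hy : ∀ v, 0 ≤ y v)
    (hIN : ∀ v ∈ Good, ∑ u' ∈ INstar v, y u' ≤ 1/3)
    (hOUT : ∀ u : V,
      ∑ w ∈ (G.neighborFinset u).filter (fun w =>
          G.degree u < G.degree w ∨ (G.degree u = G.degree w ∧ ID u < ID w)), y w ≤ 1/4) :
    (∑ v ∈ Good, (G.degree v : ℝ)/2 * ∑ u ∈ INstar v, y u) / 3 ≤
      (∑ v ∈ Good, (G.degree v : ℝ)/2 * ∑ u ∈ INstar v, y u) -
        ∑ v ∈ Good, (G.degree v : ℝ)/2 *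
          ((∑ u ∈ INstar v, ∑ u' ∈ INstar v, y u * y u') +
            ∑ u ∈ INstar v,
              ∑ w ∈ (G.neighborFinset u).filter (fun w =>
                G.degree u < G.degree w ∨ (G.degree u = G.degree w ∧ ID u < ID w)),
                y u * y w) :=
  stmt_14_general G ID Good INstar y hy hIN hOUT
end

section
/- Let G be a finite simple graph with an injective identifier function ID : V(G) → ℕ, and for a vertex u let OUT(u) = {w ∈ N(u) : (deg(u), ID(u)) < (deg(w), ID(w))} with pairs compared lexicographically. Let Good ⊆ V(G) with ∑_{v ∈ Good} deg(v) ≥ |E(G)|/2, for each v ∈ Good let IN*(v) be a set of neighbors u of v with (deg(u), ID(u)) < (deg(v), ID(v)), and let y : V(G) → ℝ be nonnegative. Assume that for every v ∈ Good, 1/1000 ≤ ∑_{u ∈ IN*(v)} y_u ≤ 1/3, and that for every vertex u, ∑_{w ∈ OUT(u)} y_w ≤ 1/4. Define 𝐮(y) = ∑_{v ∈ Good} (deg(v)/2) · ∑_{u ∈ IN*(v)} y_u and 𝐜(y) = ∑_{v ∈ Good} (deg(v)/2) · ( ∑_{u ∈ IN*(v)} ∑_{u' ∈ IN*(v)} y_u·y_{u'}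 + ∑_{u ∈ IN*(v)} ∑_{w ∈ OUT(u)} y_u·y_w ). Then 𝐮(y) − 𝐜(y) ≥ |E(G)|/12000. -/
/-!
Each good vertex `v` contributes `deg v / 2 · (S - S² - C)` with `S = ∑_{IN*(v)} y` and
cross term `C ≤ S / 4` (since every `OUT(u)` carries mass at most `1/4`). On
`1/1000 ≤ S ≤ 1/3` the concave function `S (3/4 - S)` is at least `1/2400`, so `v`
contributes at least `deg v / 4800`; summing over `Good`, which carries degree mass
at least `|E| / 2`, gives `|E| / 9600 ≥ |E| / 12000`.
-/

theorem Finset.sum_sum_mul_le_mul_sum {ι κ : Type*} {s : Finset ι} {t : ι → Finset κ}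
    {x : ι → ℝ} {z : κ → ℝ} {c : ℝ} (hx : ∀ i ∈ s, 0 ≤ x i)
    (hz : ∀ i ∈ s, ∑ k ∈ t i, z k ≤ c) :
    ∑ i ∈ s, ∑ k ∈ t i, x i * z k ≤ c * ∑ i ∈ s, x i := by
  rw [Finset.mul_sum]
  refine Finset.sum_le_sum fun i hi => ?_
  rw [← Finset.mul_sum, mul_comm c]
  exact mul_le_mul_of_nonneg_left (hz i hi) (hx i hi)

lemma div_4800_le_half_mul_sub_sq_add {d S C : ℝ} (hd : 0 ≤ d) (hS₁ : 1 / 1000 ≤ S)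
    (hS₂ : S ≤ 1 / 3) (hC : C ≤ 1 / 4 * S) :
    d / 4800 ≤ d / 2 * S - d / 2 * (S * S + C) := by
  have hconcave : 1 / 2400 ≤ S - (S * S + C) := by nlinarith
  nlinarith

theorem stmt_15_general {V : Type*} [Fintype V]
    (G : SimpleGraph V) [DecidableRel G.Adj]
    (ID : V → ℕ)
    (Good : Finset V) (INstar : V → Finset V)
    (hGood : (G.edgeFinset.card : ℝ) / 2 ≤ ∑ v ∈ Good, (G.degree v : ℝ))
    (y : V → ℝ) (hy : ∀ v, 0 ≤ y v)
    (hIN : ∀ v ∈ Good, (1/1000 : ℝ) ≤ ∑ u ∈ INstar v, y u ∧ ∑ u ∈ INstar v, y u ≤ 1/3)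
    (hOUT : ∀ u : V,
      ∑ w ∈ (G.neighborFinset u).filter (fun w =>
          G.degree u < G.degree w ∨ (G.degree u = G.degree w ∧ ID u < ID w)), y w ≤ 1/4) :
    (G.edgeFinset.card : ℝ) / 12000 ≤
      (∑ v ∈ Good, (G.degree v : ℝ)/2 * ∑ u ∈ INstar v, y u) -
        ∑ v ∈ Good, (G.degree v : ℝ)/2 *
          ((∑ u ∈ INstar v, ∑ u' ∈ INstar v, y u * y u') +
            ∑ u ∈ INstar v,
              ∑ w ∈ (G.neighborFinset u).filter (fun w =>
                G.degree u < G.degree w ∨ (G.degree u = G.degree w ∧ ID u < ID w)),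
                y u * y w) := by
  rw [← Finset.sum_sub_distrib]
  calc (G.edgeFinset.card : ℝ) / 12000 ≤ ∑ v ∈ Good, (G.degree v : ℝ) / 4800 := by
        rw [← Finset.sum_div]
        linarith [(Nat.cast_nonneg _ : (0 : ℝ) ≤ G.edgeFinset.card)]
    _ ≤ _ := Finset.sum_le_sum fun v hv => by
        rw [← Finset.sum_mul_sum]
        exact div_4800_le_half_mul_sub_sq_add (by positivity) (hIN v hv).1 (hIN v hv).2
          (Finset.sum_sum_mul_le_mul_sum (fun u _ => hy u) (fun u _ => hOUT u))

/-- Under the hypotheses of the rounding setup (Good vertices carrying at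
least half of the edge-degree mass, 1/1000 ≤ ∑_{u∈IN*(v)} y_u ≤ 1/3 for v ∈ Good, and
∑_{w∈OUT(u)} y_w ≤ 1/4 for all u), the pessimistic estimator satisfies
𝐮(y) − 𝐜(y) ≥ |E(G)|/12000. -/
theorem stmt_15 {V : Type*} [Fintype V] [DecidableEq V]
    (G : SimpleGraph V) [DecidableRel G.Adj]
    (ID : V → ℕ) (hID : Function.Injective ID)
    (Good : Finset V) (INstar : V → Finset V)
    (hGood : (G.edgeFinset.card : ℝ) / 2 ≤ ∑ v ∈ Good, (G.degree v : ℝ))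
    (hINstar : ∀ v ∈ Good, ∀ u ∈ INstar v, G.Adj u v ∧
      (G.degree u < G.degree v ∨ (G.degree u = G.degree v ∧ ID u < ID v)))
    (y : V → ℝ) (hy : ∀ v, 0 ≤ y v)
    (hIN : ∀ v ∈ Good, (1/1000 : ℝ) ≤ ∑ u ∈ INstar v, y u ∧ ∑ u ∈ INstar v, y u ≤ 1/3)
    (hOUT : ∀ u : V,
      ∑ w ∈ (G.neighborFinset u).filter (fun w =>
          G.degree u < G.degree w ∨ (G.degree u = G.degree w ∧ ID u < ID w)), y w ≤ 1/4) :
    (G.edgeFinset.card : ℝ) / 12000 ≤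
      (∑ v ∈ Good, (G.degree v : ℝ)/2 * ∑ u ∈ INstar v, y u) -
        ∑ v ∈ Good, (G.degree v : ℝ)/2 *
          ((∑ u ∈ INstar v, ∑ u' ∈ INstar v, y u * y u') +
            ∑ u ∈ INstar v,
              ∑ w ∈ (G.neighborFinset u).filter (fun w =>
                G.degree u < G.degree w ∨ (G.degree u = G.degree w ∧ ID u < ID w)),
                y u * y w) :=
  stmt_15_general G ID Good INstar hGood y hy hIN hOUT
end

section
/- Let G be a finite simple graph, let c and d be natural numbers, and suppose the vertex set of G is partitioned into c sets V_1, …, V_c such that for each i, any two vertices lying in the same connected component of the induced subgraph G[V_i] are at distance at most d within G[V_i]. If every cycle of G has length greater than 2d+1 (equivalently, the girth of G exceeds 2d+1), then the chromatic number of G is at most 2c. -/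
/-!
Colour a vertex `x ∈ V_i` by the pair `(i, parity of the distance from x to a fixed root of its
component in G[V_i])`. Two adjacent vertices of the same component whose distances to the root
have the same parity are at the same distance `k ≤ d` from it, and the two shortest paths together
with the edge form a closed walk of odd length `2k + 1 ≤ 2d + 1`. An odd closed walk contains a
cycle no longer than itself, contradicting the girth.
-/

namespace SimpleGraph

variable {V : Type*} {G : SimpleGraph V}

namespace Walk

theorem egirth_le_length_or_exists_isPath [DecidableEq V] {u v : V} (p : G.Walk u v) :
    G.egirth ≤ p.length ∨
      ∃ q : G.Walk u v, q.IsPath ∧ q.length ≤ p.length ∧ Even (q.length + p.length) := by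
  induction p with
  | nil => exact .inr ⟨nil, .nil, le_rfl, by simp⟩
  | @cons u w v huw p ih =>
    rcases ih with hp | ⟨q, hq, hqp, hpar⟩
    · exact .inl (hp.trans (by simp))
    by_cases hu : u ∈ q.support
    · have hlen : (q.takeUntil u hu).length + (q.dropUntil u hu).length = q.length := by
        rw [← length_append, take_spec]
      rcases Nat.even_or_odd (q.takeUntil u hu).length with heven | hodd
      · -- an even path from `w` back to `u` closes up with the edge `uw` to an odd cycle
        have hpath := hq.takeUntil hu
        have hcyc : (cons huw (q.takeUntil u hu)).IsCycle := by
          refine (cons_isCycle_iff _ huw).2 ⟨hpath, fun he => ?_⟩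
          have := hpath.length_eq_one_of_mem_edges (Sym2.eq_swap ▸ he)
          grind
        refine .inl ((egirth_le_length hcyc).trans ?_)
        simp only [length_cons, Nat.cast_le]
        omega
      · refine .inr ⟨q.dropUntil u hu, hq.dropUntil hu, by simp; omega, ?_⟩
        simp only [length_cons]
        grind
    · exact .inr ⟨cons huw q, hq.cons hu, by simpa, by simp only [length_cons]; grind⟩

theorem egirth_le_length_of_odd {u : V} (p : G.Walk u u) (hp : Odd p.length) :
    G.egirth ≤ p.length := by
  classical
  refine p.egirth_le_length_or_exists_isPath.resolve_right ?_
  rintro ⟨q, hq, -, hpar⟩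
  rw [length_eq_zero_iff.2 (isPath_iff_nil.1 hq), zero_add] at hpar
  exact Nat.not_even_iff_odd.2 hp hpar

end Walk

theorem dist_ne_of_adj_of_lt_egirth {d : ℕ} (hg : 2 * d + 1 < G.egirth) {r u v : V}
    (huv : G.Adj u v) (hr : G.Reachable r u) (hd : G.dist r u ≤ d) :
    G.dist r u ≠ G.dist r v := by
  intro heq
  obtain ⟨p, hp⟩ := hr.exists_walk_length_eq_dist
  obtain ⟨q, hq⟩ := (hr.trans huv.reachable).exists_walk_length_eq_dist
  have hlen : (p.append (.cons huv q.reverse)).length = 2 * G.dist r u + 1 := by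
    simp only [Walk.length_append, Walk.length_cons, Walk.length_reverse]
    omega
  have hcyc := (p.append (.cons huv q.reverse)).egirth_le_length_of_odd
    (hlen ▸ odd_two_mul_add_one _)
  have hle : ((2 * G.dist r u + 1 : ℕ) : ℕ∞) ≤ 2 * d + 1 := by
    exact_mod_cast (by omega : 2 * G.dist r u + 1 ≤ 2 * d + 1)
  exact (hg.trans_le ((hlen ▸ hcyc).trans hle)).false

theorem lt_egirth_iff {n : ℕ} :
    n < G.egirth ↔ ∀ a (w : G.Walk a a), w.IsCycle → n < w.length := by
  rw [← ENat.add_one_le_iff (ENat.natCast_ne_top n), ← Nat.cast_succ, le_egirth]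
  simp only [Nat.cast_le, Nat.succ_le_iff]

theorem colorable_two_of_dist_le_of_lt_egirth {d : ℕ}
    (hdiam : ∀ u v, G.Reachable u v → G.dist u v ≤ d) (hg : 2 * d + 1 < G.egirth) :
    G.Colorable 2 := by
  let root (v : V) : V := (G.connectedComponentMk v).out
  refine ⟨Coloring.mk (fun v => (⟨G.dist (root v) v % 2, Nat.mod_lt _ two_pos⟩ : Fin 2)) ?_⟩
  intro u v huv hcol
  have hroot : root v = root u := by
    simp only [root, ConnectedComponent.connectedComponentMk_eq_of_adj huv]
  have hr : G.Reachable (root u) u :=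
    ConnectedComponent.exact (G.connectedComponentMk u).out_eq
  have hne := dist_ne_of_adj_of_lt_egirth hg huv hr (hdiam _ _ hr)
  rw [hroot, Fin.mk.injEq] at hcol
  rcases huv.diff_dist_adj (u := root u) with h | h | h <;> omega

theorem colorable_mul_of_forall_induce_colorable {ι : Type*} [Fintype ι] {k : ℕ}
    (P : ι → Set V) (hcover : ∀ x, ∃ i, x ∈ P i)
    (hP : ∀ i, (G.induce (P i)).Colorable k) :
    G.Colorable (Fintype.card ι * k) := by
  choose idx hidx using hcover
  let C i : (G.induce (P i)).Coloring (Fin k) := (hP i).some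
  have hvalid {x y : V} (hxy : G.Adj x y) {i j : ι} (hx : x ∈ P i) (hy : y ∈ P j)
      (hij : i = j) : C i ⟨x, hx⟩ ≠ C j ⟨y, hy⟩ := by
    subst hij
    exact (C i).valid hxy
  simpa using (Coloring.mk (fun x => (idx x, C (idx x) ⟨x, hidx x⟩))
    fun hxy hcol => hvalid hxy _ _ (Prod.ext_iff.1 hcol).1 (Prod.ext_iff.1 hcol).2).colorable

end SimpleGraph

theorem stmt_16_general {V : Type*}
    (G : SimpleGraph V) (c d : ℕ)
    (P : Fin c → Set V)
    (hcover : ∀ x, ∃ i, x ∈ P i)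
    (hdiam : ∀ i, ∀ u v : ↥(P i), (G.induce (P i)).Reachable u v →
      (G.induce (P i)).dist u v ≤ d)
    (hgirth : ∀ (v : V) (p : G.Walk v v), p.IsCycle → 2*d + 1 < p.length) :
    G.chromaticNumber ≤ ((2*c : ℕ) : ℕ∞) := by
  have hg : 2 * d + 1 < G.egirth := by
    exact_mod_cast SimpleGraph.lt_egirth_iff.2 hgirth
  have hcol := SimpleGraph.colorable_mul_of_forall_induce_colorable P hcover fun i =>
    SimpleGraph.colorable_two_of_dist_le_of_lt_egirth (hdiam i)
      (hg.trans_le (SimpleGraph.Embedding.induce (P i)).isContained.egirth_le)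
  rw [Fintype.card_fin, mul_comm] at hcol
  exact hcol.chromaticNumber_le

/-- If the vertices of a finite simple graph G are partitioned into c sets
such that within each induced part any two vertices in the same connected component are
at distance at most d (inside the induced subgraph), and every cycle of G has length
greater than 2d+1, then the chromatic number of G is at most 2c. -/
theorem stmt_16 {V : Type*} [Fintype V] [DecidableEq V]
    (G : SimpleGraph V) (c d : ℕ)
    (P : Fin c → Set V)
    (hdisj : ∀ i j, i ≠ j → Disjoint (P i) (P j))
    (hcover : ∀ x, ∃ i, x ∈ P i)
    (hdiam : ∀ i, ∀ u v : ↥(P i), (G.induce (P i)).Reachable u v →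
      (G.induce (P i)).dist u v ≤ d)
    (hgirth : ∀ (v : V) (p : G.Walk v v), p.IsCycle → 2*d + 1 < p.length) :
    G.chromaticNumber ≤ ((2*c : ℕ) : ℕ∞) :=
  stmt_16_general G c d P hcover hdiam hgirth
end
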